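/- Let A be a |U|×|X| matrix with nonnegative entries, columns summing to 1, and no zero rows, with a_min as defined. Fix 2 ≤ n ≤ |U|, a positive ε_s satisfying the bound of the tolerance-recursion lemma, and ε' with a_min² ε_s/((a_min-ε_s) ã_{n-1}) < ε' < a_min, where ã_{n-1} = a_min²(1+(n-1)/a_min)^{-1}. Suppose the left null space of A contains no L1-normalized (a_min, ε')-double polarized 1×|U| vector. Then there exists ε > 0 such that: whenever the left null space of A contains an n×|U| matrix whose rows are L1-normalized and whose i-th row is (a_min, ε)-polarized at i for each i, no row of that matrix is ε_s-dependent upon the other rows. -/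

import Mathlib

open Finset

/-- Minimum row sum of the matrix `A`. -/
noncomputable def Amin {U X : ℕ} [NeZero U] (A : Matrix (Fin U) (Fin X) ℝ) : ℝ :=
  Finset.univ.inf' Finset.univ_nonempty (fun i => ∑ j, A i j)

/-- The constant `a_min = A_min / (|U|(|X| + A_min))`. -/
noncomputable def amin {U X : ℕ} [NeZero U] (A : Matrix (Fin U) (Fin X) ℝ) : ℝ :=
  Amin A / (U * (X + Amin A))

/-!
Write `β = |U| a_min ≤ 1/2`. Because the row sums of `A` lie between `A_min` and `|X|`, every
vector of the left null space of `A` carries at least the fraction `β` of its `ℓ¹` mass in its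
positive coordinates, and likewise in its negative ones.

Suppose row `i₀` of `Υ` were `ε_s`-dependent on the others. Dividing the relation by its largest
coefficient gives coefficients `e` with `e_j = 1`, `|e| ≤ 1` and `‖e Υ‖₁ ≤ ε_s`. The negative
part `e⁻ Υ` lies in the null space and its positive coordinates are `O(ε + ε_s)`, so by the mass
bound `‖e⁺ Υ‖₁` is small too. In the nonnegative combination `e⁺ Υ` the spike of row `j` is
cancelled, up to that small error, by negative entries of the other rows; let `q` be the row that
contributes most. Reweighting the rows by a fixed point of a monotone map, with weight `1` on `j`
and `0` on `q`, cancels every other spike as well, while the spike at `j` keeps at least a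
`1/(n-1)` share of its size. The result, normalized, is an `(a_min, ε')`-double polarized vector
of the left null space once `ε` is small enough, which was excluded.
-/

open Matrix Function

section PositiveMass

variable {κ χ : Type*} [Fintype κ]

def PositiveMassBound (A : Matrix κ χ ℝ) (β : ℝ) : Prop :=
  ∀ ω : κ → ℝ, ω ᵥ* A = 0 → β * ∑ u, |ω u| ≤ ∑ u, (ω u)⁺

variable {A : Matrix κ χ ℝ} {β : ℝ}

theorem PositiveMassBound.mul_le_sum_negPart (hA : PositiveMassBound A β) {ω : κ → ℝ}
    (hω : ω ᵥ* A = 0) : β * ∑ u, |ω u| ≤ ∑ u, (ω u)⁻ := by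
  simpa using hA (-ω) (by rw [neg_vecMul, hω, neg_zero])

/-- Since `ω A = 0`, the row sums of `A` weigh the positive and the negative part of `ω`
equally. -/
theorem positiveMassBound_of_row_sum [Fintype χ] {r R : ℝ} (hr : 0 < r) (hR : 0 ≤ R)
    (hr_le : ∀ u, r ≤ ∑ l, A u l) (hle_R : ∀ u, ∑ l, A u l ≤ R) :
    PositiveMassBound A (r / (R + r)) := by
  intro ω hω
  have hbal : ∑ u, (ω u)⁺ * ∑ l, A u l = ∑ u, (ω u)⁻ * ∑ l, A u l := by
    have h : ∑ u, ω u * ∑ l, A u l = 0 := by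
      simpa [dotProduct, mulVec, hω] using dotProduct_mulVec ω A 1
    rw [← sub_eq_zero, ← sum_sub_distrib, ← h]
    simp_rw [← sub_mul, posPart_sub_negPart]
  have hneg : r * ∑ u, (ω u)⁻ ≤ R * ∑ u, (ω u)⁺ := calc
    r * ∑ u, (ω u)⁻ ≤ ∑ u, (ω u)⁻ * ∑ l, A u l := by
      rw [mul_sum]
      exact sum_le_sum fun u _ => by
        rw [mul_comm r]; exact mul_le_mul_of_nonneg_left (hr_le u) (negPart_nonneg _)
    _ = ∑ u, (ω u)⁺ * ∑ l, A u l := hbal.symm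
    _ ≤ R * ∑ u, (ω u)⁺ := by
      rw [mul_sum]
      exact sum_le_sum fun u _ => by
        rw [mul_comm R]; exact mul_le_mul_of_nonneg_left (hle_R u) (posPart_nonneg _)
  have habs : ∑ u, |ω u| = ∑ u, (ω u)⁺ + ∑ u, (ω u)⁻ := by
    rw [← sum_add_distrib]
    simp [posPart_add_negPart]
  rw [div_mul_eq_mul_div, div_le_iff₀ (by linarith), habs]
  linarith

theorem PositiveMassBound.sub_le_apply [DecidableEq κ] {ε : ℝ} (hA : PositiveMassBound A β)
    {ω : κ → ℝ} (hω : ω ᵥ* A = 0) (h1 : ∑ u, |ω u| = 1) {j : κ} (hj : 0 ≤ ω j) (hε : 0 ≤ ε)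
    (hoff : ∀ u, u ≠ j → ω u ≤ ε) : β - Fintype.card κ * ε ≤ ω j := by
  have hmass := hA ω hω
  rw [h1, mul_one, ← add_sum_erase _ _ (mem_univ j), posPart_eq_self.2 hj] at hmass
  have hrest : ∑ u ∈ univ.erase j, (ω u)⁺ ≤ Fintype.card κ * ε := calc
    _ ≤ ∑ _u ∈ univ.erase j, ε := sum_le_sum fun u hu => sup_le (hoff u (ne_of_mem_erase hu)) hε
    _ ≤ Fintype.card κ * ε := by
      rw [sum_const, nsmul_eq_mul]
      gcongr
      exact_mod_cast card_le_univ _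
  linarith

end PositiveMass

section amin

variable {U X : ℕ} {A : Matrix (Fin U) (Fin X) ℝ}

theorem row_sum_le_card (hA0 : ∀ i j, 0 ≤ A i j) (hcol : ∀ j, ∑ i, A i j = 1) (i : Fin U) :
    ∑ j, A i j ≤ X := calc
  ∑ j, A i j ≤ ∑ _j : Fin X, (1 : ℝ) :=
    sum_le_sum fun j _ => (single_le_sum (fun k _ => hA0 k j) (mem_univ i)).trans (hcol j).le
  _ = X := by simp

variable [NeZero U]

theorem Amin_le_row_sum (i : Fin U) : Amin A ≤ ∑ j, A i j :=
  inf'_le _ (mem_univ i)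

theorem Amin_pos (hA0 : ∀ i j, 0 ≤ A i j) (hrow : ∀ i, ∃ j, A i j ≠ 0) : 0 < Amin A := by
  refine (lt_inf'_iff _).2 fun i _ => ?_
  obtain ⟨j, hj⟩ := hrow i
  exact sum_pos' (fun k _ => hA0 i k) ⟨j, mem_univ j, (hA0 i j).lt_of_ne' hj⟩

theorem amin_pos (hA0 : ∀ i j, 0 ≤ A i j) (hrow : ∀ i, ∃ j, A i j ≠ 0) : 0 < amin A := by
  have := Amin_pos hA0 hrow
  exact div_pos this (mul_pos (Nat.cast_pos.2 (NeZero.pos U)) (by positivity))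

theorem card_mul_amin : (U : ℝ) * amin A = Amin A / (X + Amin A) := by
  rw [amin, mul_div_assoc', mul_div_mul_left _ _ (Nat.cast_ne_zero.2 (NeZero.ne U))]

theorem card_mul_amin_le_half (hA0 : ∀ i j, 0 ≤ A i j) (hcol : ∀ j, ∑ i, A i j = 1)
    (hrow : ∀ i, ∃ j, A i j ≠ 0) : (U : ℝ) * amin A ≤ 1 / 2 := by
  have hpos := Amin_pos hA0 hrow
  have hle := (Amin_le_row_sum (A := A) 0).trans (row_sum_le_card hA0 hcol 0)
  rw [card_mul_amin, div_le_iff₀ (by linarith)]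
  linarith

theorem positiveMassBound_amin (hA0 : ∀ i j, 0 ≤ A i j) (hcol : ∀ j, ∑ i, A i j = 1)
    (hrow : ∀ i, ∃ j, A i j ≠ 0) : PositiveMassBound A (U * amin A) := by
  rw [card_mul_amin]
  exact positiveMassBound_of_row_sum (Amin_pos hA0 hrow) X.cast_nonneg Amin_le_row_sum
    (row_sum_le_card hA0 hcol)

end amin

theorem exists_fixedPt_of_monotone {α : Type*} [ConditionallyCompleteLattice α] {lo hi : α}
    (hle : lo ≤ hi) {G : α → α} (hG : Monotone G)
    (hmaps : Set.MapsTo G (Set.Icc lo hi) (Set.Icc lo hi)) : ∃ z ∈ Set.Icc lo hi, G z = z := by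
  have : Fact (lo ≤ hi) := ⟨hle⟩
  let G' : Set.Icc lo hi →o Set.Icc lo hi := ⟨hmaps.restrict G _ _, fun _ _ h => hG h⟩
  exact ⟨G'.lfp, G'.lfp.2, congrArg Subtype.val G'.map_lfp⟩

section Combinations

variable {ι κ : Type*} [Fintype ι] {Υ : Matrix ι κ ℝ} {pos : ι → κ} {ε : ℝ}

theorem vecMul_apply_eq_sub (b : ι → ℝ) (u : κ) :
    (b ᵥ* Υ) u = ∑ k, b k * (Υ k u)⁺ - ∑ k, b k * (Υ k u)⁻ := by
  simp only [vecMul, dotProduct, ← sum_sub_distrib, ← mul_sub, posPart_sub_negPart]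

theorem vecMul_vecMul_eq_zero [Fintype κ] {χ : Type*} {A : Matrix κ χ ℝ}
    (hnull : ∀ k, Υ k ᵥ* A = 0) (y : ι → ℝ) : (y ᵥ* Υ) ᵥ* A = 0 := by
  rw [vecMul_vecMul, show Υ * A = 0 from funext hnull, vecMul_zero]

theorem sum_mul_posPart_le (hε : 0 ≤ ε) (hoff : ∀ k u, u ≠ pos k → Υ k u ≤ ε)
    {s : Finset ι} {b : ι → ℝ} {u : κ} (hb : ∀ k ∈ s, 0 ≤ b k ∧ b k ≤ 1)
    (hu : ∀ k ∈ s, b k ≠ 0 → u ≠ pos k) :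
    ∑ k ∈ s, b k * (Υ k u)⁺ ≤ Fintype.card ι * ε := calc
  ∑ k ∈ s, b k * (Υ k u)⁺ ≤ ∑ _k ∈ s, ε := sum_le_sum fun k hk => by
    by_cases hbk : b k = 0
    · simpa [hbk] using hε
    · exact (mul_le_mul (hb k hk).2 (sup_le (hoff k u (hu k hk hbk)) hε)
        (posPart_nonneg _) zero_le_one).trans_eq (one_mul ε)
  _ ≤ Fintype.card ι * ε := by
    rw [sum_const, nsmul_eq_mul]
    gcongr
    exact_mod_cast card_le_univ s

theorem vecMul_apply_le (hε : 0 ≤ ε) (hoff : ∀ k u, u ≠ pos k → Υ k u ≤ ε) {b : ι → ℝ}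
    (hb0 : 0 ≤ b) (hb1 : b ≤ 1) {u : κ} (hu : ∀ k, b k ≠ 0 → u ≠ pos k) :
    (b ᵥ* Υ) u ≤ Fintype.card ι * ε := by
  have hP := sum_mul_posPart_le hε hoff (s := univ) (fun k _ => ⟨hb0 k, hb1 k⟩) fun k _ => hu k
  have hN : 0 ≤ ∑ k, b k * (Υ k u)⁻ :=
    sum_nonneg fun k _ => mul_nonneg (hb0 k) (negPart_nonneg _)
  rw [vecMul_apply_eq_sub]
  linarith

theorem sum_abs_posPart_vecMul_le [Fintype κ] {χ : Type*} {A : Matrix κ χ ℝ}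
    {β : ℝ} (hA : PositiveMassBound A β) (hβ : 0 < β) (hnull : ∀ k, Υ k ᵥ* A = 0)
    (hpos : Injective pos) (hε : 0 ≤ ε) (hoff : ∀ k u, u ≠ pos k → Υ k u ≤ ε) {e : ι → ℝ}
    (he : ∀ k, |e k| ≤ 1) {s : ℝ} (hs : ∑ u, |(e ᵥ* Υ) u| ≤ s) :
    ∑ u, |(e⁺ ᵥ* Υ) u| ≤ s + (Fintype.card κ * (Fintype.card ι * ε) + s) / β := by
  set δ := e ᵥ* Υ
  set v := e⁻ ᵥ* Υ
  have hw : e⁺ ᵥ* Υ = δ + v := by rw [← add_vecMul, ← eq_add_of_sub_eq (posPart_sub_negPart e)]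
  have hpos1 : e⁺ ≤ 1 := fun k => sup_le ((le_abs_self _).trans (he k)) zero_le_one
  have hneg1 : e⁻ ≤ 1 := fun k => sup_le ((neg_le_abs _).trans (he k)) zero_le_one
  have hv : ∀ u, (v u)⁺ ≤ Fintype.card ι * ε + |δ u| := fun u => by
    refine sup_le ?_ (by positivity)
    by_cases h : ∃ m, u = pos m ∧ e m < 0
    · obtain ⟨m, rfl, hm⟩ := h
      have hwm : (e⁺ ᵥ* Υ) (pos m) ≤ Fintype.card ι * ε :=
        vecMul_apply_le hε hoff (posPart_nonneg e) hpos1 fun k hk => hpos.ne fun hkm => by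
          subst hkm; exact hk (by simpa using hm.le)
      rw [hw, Pi.add_apply] at hwm
      linarith [neg_abs_le (δ (pos m))]
    · simp only [not_exists, not_and, not_lt] at h
      have hvu : v u ≤ Fintype.card ι * ε :=
        vecMul_apply_le hε hoff (negPart_nonneg e) hneg1 fun k hk hu => hk (by simpa using h k hu)
      linarith [abs_nonneg (δ u)]
  have hv1 : ∑ u, |v u| ≤ (Fintype.card κ * (Fintype.card ι * ε) + s) / β := by
    rw [le_div_iff₀ hβ, mul_comm]
    calc β * ∑ u, |v u| ≤ ∑ u, (v u)⁺ := hA v (vecMul_vecMul_eq_zero hnull _)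
      _ ≤ ∑ u, (Fintype.card ι * ε + |δ u|) := sum_le_sum fun u _ => hv u
      _ ≤ Fintype.card κ * (Fintype.card ι * ε) + s := by
        rw [sum_add_distrib, sum_const, card_univ, nsmul_eq_mul]
        linarith
  calc ∑ u, |(e⁺ ᵥ* Υ) u| ≤ ∑ u, (|δ u| + |v u|) := by
        rw [hw]; exact sum_le_sum fun u _ => abs_add_le _ _
    _ ≤ _ := by rw [sum_add_distrib]; linarith

/-- Row `m` enters with weight `y m`; its spike at `pos m` is cancelled by the negative entries
the other rows place there, unless the weight saturates at `c m`. -/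
structure BalancedCoeffs (Υ : Matrix ι κ ℝ) (pos : ι → κ) (c y : ι → ℝ) (j q : ι) : Prop where
  nonneg : 0 ≤ y
  le : y ≤ c
  eq_one : y j = 1
  eq_zero : y q = 0
  mul_le : ∀ m, m ≠ j → m ≠ q → y m * Υ m (pos m) ≤ ∑ k, y k * (Υ k (pos m))⁻
  eq_or_mul_eq : ∀ m, m ≠ j → m ≠ q →
    y m = c m ∨ y m * Υ m (pos m) = ∑ k, y k * (Υ k (pos m))⁻

variable {c y : ι → ℝ} {j q : ι}

theorem BalancedCoeffs.sub_vecMul_apply_le (hy : BalancedCoeffs Υ pos c y j q) (hε : 0 ≤ ε)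
    (hoff : ∀ k u, u ≠ pos k → Υ k u ≤ ε) (hc1 : c ≤ 1) {u : κ}
    (hu : ∀ k, u = pos k → y k = c k) :
    (c ᵥ* Υ) u - (y ᵥ* Υ) u ≤ Fintype.card ι * ε := by
  rw [← Pi.sub_apply, ← sub_vecMul]
  exact vecMul_apply_le hε hoff (sub_nonneg.2 hy.le)
    (fun k => (sub_le_self _ (hy.nonneg k)).trans (hc1 k))
    fun k hk hku => hk (by rw [Pi.sub_apply, hu k hku, sub_self])

theorem BalancedCoeffs.le_vecMul_apply_left (hy : BalancedCoeffs Υ pos c y j q)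
    (hpos : Injective pos) (hε : 0 ≤ ε) (hoff : ∀ k u, u ≠ pos k → Υ k u ≤ ε) (hc1 : c ≤ 1)
    (hcj : c j = 1) :
    c q * (Υ q (pos j))⁻ - |(c ᵥ* Υ) (pos j)| - Fintype.card ι * ε ≤ (y ᵥ* Υ) (pos j) := by
  have hb0 : 0 ≤ c - y := sub_nonneg.2 hy.le
  have hdiff : ((c - y) ᵥ* Υ) (pos j) = _ := vecMul_apply_eq_sub _ _
  have hP := sum_mul_posPart_le hε hoff (s := univ) (b := c - y) (u := pos j)
    (fun k _ => ⟨hb0 k, (sub_le_self _ (hy.nonneg k)).trans (hc1 k)⟩)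
    fun k _ hk => hpos.ne fun hjk => hk (by rw [← hjk, Pi.sub_apply, hcj, hy.eq_one, sub_self])
  have hN : (c - y) q * (Υ q (pos j))⁻ ≤ ∑ k, (c - y) k * (Υ k (pos j))⁻ :=
    single_le_sum (f := fun k => (c - y) k * (Υ k (pos j))⁻)
      (fun k _ => mul_nonneg (hb0 k) (negPart_nonneg _)) (mem_univ q)
  rw [sub_vecMul, Pi.sub_apply] at hdiff
  rw [Pi.sub_apply, hy.eq_zero, sub_zero] at hN
  linarith [neg_abs_le ((c ᵥ* Υ) (pos j))]

variable [DecidableEq ι]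

theorem exists_normalized_relation [Fintype κ] {i₀ : ι} {s : ℝ}
    (hc : ∑ u, |Υ i₀ u - ∑ k ∈ univ.erase i₀, c k * Υ k u| ≤ s) :
    ∃ (j : ι) (e : ι → ℝ), e j = 1 ∧ (∀ k, |e k| ≤ 1) ∧ ∑ u, |(e ᵥ* Υ) u| ≤ s := by
  set d : ι → ℝ := fun k => if k = i₀ then 1 else -c k
  have hd : ∀ u, (d ᵥ* Υ) u = Υ i₀ u - ∑ k ∈ univ.erase i₀, c k * Υ k u := fun u => by
    simp only [vecMul, dotProduct]
    rw [← add_sum_erase _ _ (mem_univ i₀), sub_eq_add_neg, ← sum_neg_distrib]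
    congr 1
    · simp [d]
    · exact sum_congr rfl fun k hk => by simp [d, ne_of_mem_erase hk]
  obtain ⟨j, -, hj⟩ := exists_max_image univ (fun k => |d k|) ⟨i₀, mem_univ i₀⟩
  have hdj : 1 ≤ |d j| := by simpa [d] using hj i₀ (mem_univ i₀)
  have hdj0 : 0 < |d j| := one_pos.trans_le hdj
  refine ⟨j, (d j)⁻¹ • d, inv_mul_cancel₀ (abs_pos.1 hdj0), fun k => ?_, ?_⟩
  · rw [Pi.smul_apply, smul_eq_mul, abs_mul, abs_inv, inv_mul_le_iff₀ hdj0, mul_one]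
    exact hj k (mem_univ k)
  · calc ∑ u, |(((d j)⁻¹ • d) ᵥ* Υ) u| = |d j|⁻¹ * ∑ u, |(d ᵥ* Υ) u| := by
          simp [smul_vecMul, abs_mul, mul_sum]
      _ ≤ ∑ u, |(d ᵥ* Υ) u| :=
          mul_le_of_le_one_left (sum_nonneg fun _ _ => abs_nonneg _) (inv_le_one_of_one_le₀ hdj)
      _ ≤ s := by simpa only [hd] using hc

theorem vecMul_apply_pos_eq {m : ι} (hm : 0 < Υ m (pos m)) (y : ι → ℝ) :
    (y ᵥ* Υ) (pos m) = ∑ k ∈ univ.erase m, y k * (Υ k (pos m))⁺ -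
      (∑ k, y k * (Υ k (pos m))⁻ - y m * Υ m (pos m)) := by
  rw [vecMul_apply_eq_sub, ← add_sum_erase _ _ (mem_univ m), posPart_eq_self.2 hm.le]
  ring

theorem exists_balancedCoeffs (hdiag : ∀ k, 0 < Υ k (pos k)) (hc0 : 0 ≤ c)
    (hjq : j ≠ q) (hcj : c j = 1) : ∃ y, BalancedCoeffs Υ pos c y j q := by
  set G : (ι → ℝ) → ι → ℝ := fun y m => if m = j then 1 else if m = q then 0 else
    min (c m) ((∑ k, y k * (Υ k (pos m))⁻) / Υ m (pos m))
  have hG : Monotone G := fun y y' h m => by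
    simp only [G]
    split_ifs
    · exact le_rfl
    · exact le_rfl
    · exact min_le_min_left _ (div_le_div_of_nonneg_right
        (sum_le_sum fun k _ => mul_le_mul_of_nonneg_right (h k) (negPart_nonneg _)) (hdiag m).le)
  have hmaps : Set.MapsTo G (Set.Icc 0 c) (Set.Icc 0 c) := by
    rintro y ⟨hy0, -⟩
    refine ⟨fun m => ?_, fun m => ?_⟩ <;> simp only [G] <;> split_ifs with hmj hmq
    · exact zero_le_one
    · exact le_rfl
    · exact le_min (hc0 m) (div_nonneg
        (sum_nonneg fun k _ => mul_nonneg (hy0 k) (negPart_nonneg _)) (hdiag m).le)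
    · rw [hmj, hcj]
    · exact hc0 m
    · exact min_le_left _ _
  obtain ⟨y, ⟨hy0, hyc⟩, hy⟩ := exists_fixedPt_of_monotone hc0 hG hmaps
  have hyG : ∀ m, m ≠ j → m ≠ q →
      y m = min (c m) ((∑ k, y k * (Υ k (pos m))⁻) / Υ m (pos m)) := fun m hmj hmq => by
    conv_lhs => rw [← hy]
    simp [G, hmj, hmq]
  refine ⟨y, hy0, hyc, by simpa [G] using (congrFun hy j).symm,
    by simpa [G, hjq.symm] using (congrFun hy q).symm, fun m hmj hmq => ?_, fun m hmj hmq => ?_⟩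
  · rw [← le_div_iff₀ (hdiag m), hyG m hmj hmq]
    exact min_le_right _ _
  · rcases min_choice (c m) ((∑ k, y k * (Υ k (pos m))⁻) / Υ m (pos m)) with h | h <;>
      rw [← hyG m hmj hmq] at h
    · exact .inl h
    · exact .inr (by rw [h, div_mul_cancel₀ _ (hdiag m).ne'])

theorem exists_le_mul_negPart (hdiag : 0 < Υ j (pos j)) (hc0 : 0 ≤ c) (hcj : c j = 1)
    (hι : 2 ≤ Fintype.card ι) : ∃ q, q ≠ j ∧
      Υ j (pos j) - (c ᵥ* Υ) (pos j) ≤ (Fintype.card ι - 1) * (c q * (Υ q (pos j))⁻) := by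
  have hne : (univ.erase j).Nonempty :=
    card_pos.1 (by rw [card_erase_of_mem (mem_univ j), card_univ]; omega)
  obtain ⟨q, hq, hmax⟩ := exists_max_image (univ.erase j) (fun k => c k * (Υ k (pos j))⁻) hne
  refine ⟨q, ne_of_mem_erase hq, ?_⟩
  have hP : c j * (Υ j (pos j))⁺ ≤ ∑ k, c k * (Υ k (pos j))⁺ :=
    single_le_sum (f := fun k => c k * (Υ k (pos j))⁺)
      (fun k _ => mul_nonneg (hc0 k) (posPart_nonneg _)) (mem_univ j)
  have hN : ∑ k, c k * (Υ k (pos j))⁻ ≤ (Fintype.card ι - 1) * (c q * (Υ q (pos j))⁻) := by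
    rw [← add_sum_erase _ _ (mem_univ j), negPart_eq_zero.2 hdiag.le, mul_zero, zero_add]
    calc _ ≤ ∑ _k ∈ univ.erase j, c q * (Υ q (pos j))⁻ := sum_le_sum hmax
      _ = _ := by
        rw [sum_const, card_erase_of_mem (mem_univ j), card_univ, nsmul_eq_mul,
          Nat.cast_sub (by omega), Nat.cast_one]
  rw [hcj, one_mul, posPart_eq_self.2 hdiag.le] at hP
  rw [vecMul_apply_eq_sub]
  linarith

theorem BalancedCoeffs.abs_vecMul_apply_le [DecidableEq κ] (hy : BalancedCoeffs Υ pos c y j q)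
    (hpos : Injective pos) (hdiag : ∀ k, 0 < Υ k (pos k)) (hε : 0 ≤ ε)
    (hoff : ∀ k u, u ≠ pos k → Υ k u ≤ ε) (hc1 : c ≤ 1) {u : κ} (hj : u ≠ pos j)
    (hq : u ≠ pos q) : |(y ᵥ* Υ) u| ≤ |(c ᵥ* Υ) u| + Fintype.card ι * ε := by
  have hy1 : y ≤ 1 := hy.le.trans hc1
  have hw := neg_abs_le ((c ᵥ* Υ) u)
  have hw0 := abs_nonneg ((c ᵥ* Υ) u)
  have hnε : 0 ≤ Fintype.card ι * ε := by positivity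
  rw [abs_le]
  by_cases hu : ∃ m, u = pos m
  · obtain ⟨m, rfl⟩ := hu
    have hmj : m ≠ j := by rintro rfl; exact hj rfl
    have hmq : m ≠ q := by rintro rfl; exact hq rfl
    have hσ := vecMul_apply_pos_eq (hdiag m) y
    have hP0 : 0 ≤ ∑ k ∈ univ.erase m, y k * (Υ k (pos m))⁺ :=
      sum_nonneg fun k _ => mul_nonneg (hy.nonneg k) (posPart_nonneg _)
    have hPε := sum_mul_posPart_le hε hoff (s := univ.erase m) (fun k _ => ⟨hy.nonneg k, hy1 k⟩)
      fun k hk _ => hpos.ne (ne_of_mem_erase hk).symm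
    have hle := hy.mul_le m hmj hmq
    rcases hy.eq_or_mul_eq m hmj hmq with hym | hym
    · have := hy.sub_vecMul_apply_le hε hoff hc1 fun k hk => by rw [← hpos hk, hym]
      constructor <;> linarith
    · constructor <;> linarith
  · simp only [not_exists] at hu
    have h1 := vecMul_apply_le hε hoff hy.nonneg hy1 fun k _ => hu k
    have h2 := hy.sub_vecMul_apply_le hε hoff hc1 fun k hk => absurd hk (hu k)
    constructor <;> linarith

theorem exists_spike [Fintype κ] [DecidableEq κ] (hpos : Injective pos)
    (hdiag : ∀ k, 0 < Υ k (pos k)) (hε : 0 ≤ ε) (hoff : ∀ k u, u ≠ pos k → Υ k u ≤ ε)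
    (hc0 : 0 ≤ c) (hc1 : c ≤ 1) (hcj : c j = 1)
    (hι : 2 ≤ Fintype.card ι) {t : ℝ} (ht : ∑ u, |(c ᵥ* Υ) u| ≤ t) {D : ℝ}
    (hD : D ≤ Υ j (pos j)) :
    ∃ (y : ι → ℝ) (k : κ), pos j ≠ k ∧
      (D - t) / (Fintype.card ι - 1) - t - Fintype.card ι * ε ≤ (y ᵥ* Υ) (pos j) ∧
      (y ᵥ* Υ) k ≤ Fintype.card ι * ε ∧
      ∑ u ∈ {pos j, k}ᶜ, |(y ᵥ* Υ) u| ≤ t + Fintype.card κ * (Fintype.card ι * ε) := by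
  obtain ⟨q, hqj, hq⟩ := exists_le_mul_negPart (hdiag j) hc0 hcj hι
  obtain ⟨y, hy⟩ := exists_balancedCoeffs hdiag hc0 hqj.symm hcj
  have hwj : |(c ᵥ* Υ) (pos j)| ≤ t :=
    (single_le_sum (f := fun u => |(c ᵥ* Υ) u|) (fun _ _ => abs_nonneg _) (mem_univ _)).trans ht
  refine ⟨y, pos q, hpos.ne hqj.symm, ?_, ?_, ?_⟩
  · have hν : (0 : ℝ) < Fintype.card ι - 1 := by
      have : (2 : ℝ) ≤ Fintype.card ι := by exact_mod_cast hι
      linarith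
    have hDq : (D - t) / (Fintype.card ι - 1) ≤ c q * (Υ q (pos j))⁻ := by
      rw [div_le_iff₀ hν, mul_comm]
      linarith [le_abs_self ((c ᵥ* Υ) (pos j))]
    linarith [hy.le_vecMul_apply_left hpos hε hoff hc1 hcj]
  · exact vecMul_apply_le hε hoff hy.nonneg (hy.le.trans hc1)
      fun k hk hqk => hk (by rw [← hpos hqk, hy.eq_zero])
  · calc ∑ u ∈ {pos j, pos q}ᶜ, |(y ᵥ* Υ) u|
        ≤ ∑ u ∈ {pos j, pos q}ᶜ, (|(c ᵥ* Υ) u| + Fintype.card ι * ε) :=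
          sum_le_sum fun u hu => by
            simp only [mem_compl, mem_insert, mem_singleton, not_or] at hu
            exact hy.abs_vecMul_apply_le hpos hdiag hε hoff hc1 hu.1 hu.2
      _ ≤ t + Fintype.card κ * (Fintype.card ι * ε) := by
        rw [sum_add_distrib, sum_const, nsmul_eq_mul]
        gcongr
        · exact (sum_le_univ_sum_of_nonneg fun _ => abs_nonneg _).trans ht
        · exact_mod_cast card_le_univ _

end Combinations

section DoublePolarized

variable {κ χ : Type*}

def IsDoublePolarized (b ε : ℝ) (ω : κ → ℝ) (j k : κ) : Prop :=
  b ≤ ω j ∧ ω k ≤ -b ∧ ∀ i, i ≠ j → i ≠ k → |ω i| ≤ ε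

variable {a ε' : ℝ} {σ : κ → ℝ} {j k : κ}

theorem IsDoublePolarized.inv_smul {N : ℝ} (hN : 0 < N)
    (h : IsDoublePolarized (a * N) (ε' * N) σ j k) : IsDoublePolarized a ε' (N⁻¹ • σ) j k := by
  refine ⟨?_, ?_, fun i hij hik => ?_⟩ <;>
    simp only [Pi.smul_apply, smul_eq_mul, abs_mul, abs_inv, abs_of_pos hN]
  · rw [le_inv_mul_iff₀ hN, mul_comm]; exact h.1
  · rw [inv_mul_le_iff₀ hN]; linarith [h.2.1]
  · rw [inv_mul_le_iff₀ hN, mul_comm]; exact h.2.2 i hij hik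

variable [Fintype κ] [DecidableEq κ] {A : Matrix κ χ ℝ} {β : ℝ}

/-- The mass bound applied to `σ` and to `-σ`: almost all positive mass sits at `j`, almost all
negative mass at `k`. -/
theorem PositiveMassBound.isDoublePolarized (hA : PositiveMassBound A β) (hσ : σ ᵥ* A = 0)
    (hjk : j ≠ k) {η J : ℝ} (ha : 0 < a) (haβ : a + ε' ≤ β) (hη : 0 ≤ η) (hk : σ k ≤ η)
    (hJ : ∑ u ∈ {j, k}ᶜ, |σ u| ≤ J) (hN : 0 < ∑ u, |σ u|)
    (hJN : J + η ≤ ε' * ∑ u, |σ u|) :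
    IsDoublePolarized (a * ∑ u, |σ u|) (ε' * ∑ u, |σ u|) σ j k := by
  set N := ∑ u, |σ u|
  have hsplit : ∀ f : κ → ℝ, ∑ u, f u = f j + f k + ∑ u ∈ {j, k}ᶜ, f u := fun f => by
    rw [← sum_add_sum_compl {j, k}, sum_pair hjk]
  have hP : β * N ≤ ∑ u, (σ u)⁺ := hA σ hσ
  have hM : β * N ≤ ∑ u, (σ u)⁻ := hA.mul_le_sum_negPart hσ
  rw [hsplit fun u => (σ u)⁺] at hP
  rw [hsplit fun u => (σ u)⁻] at hM
  have hPJ : ∑ u ∈ {j, k}ᶜ, (σ u)⁺ ≤ J :=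
    (sum_le_sum fun u _ => sup_le (le_abs_self _) (abs_nonneg _)).trans hJ
  have hMJ : ∑ u ∈ {j, k}ᶜ, (σ u)⁻ ≤ J :=
    (sum_le_sum fun u _ => sup_le (neg_le_abs _) (abs_nonneg _)).trans hJ
  have hβN : a * N + ε' * N ≤ β * N := by
    rw [← add_mul]; exact mul_le_mul_of_nonneg_right haβ hN.le
  have haN : 0 < a * N := mul_pos ha hN
  have hkP : (σ k)⁺ ≤ η := sup_le hk hη
  have hjP : a * N ≤ (σ j)⁺ := by linarith
  have hj0 : 0 < σ j := posPart_pos_iff.1 (haN.trans_le hjP)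
  rw [posPart_eq_self.2 hj0.le] at hjP
  rw [negPart_eq_zero.2 hj0.le] at hM
  have hkM : a * N ≤ (σ k)⁻ := by linarith
  rw [negPart_eq_neg.2 (negPart_pos_iff.1 (haN.trans_le hkM)).le] at hkM
  refine ⟨hjP, by linarith, fun i hij hik => ?_⟩
  have hi : i ∈ ({j, k} : Finset κ)ᶜ := by simp [hij, hik]
  have := (single_le_sum (f := fun u => |σ u|) (fun _ _ => abs_nonneg _) hi).trans hJ
  linarith

theorem exists_isDoublePolarized (hA : PositiveMassBound A β) (hσ : σ ᵥ* A = 0) (hjk : j ≠ k)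
    {η J S : ℝ} (ha : 0 < a) (haβ : a + ε' ≤ β) (hε' : 0 ≤ ε') (hη : 0 ≤ η) (hk : σ k ≤ η)
    (hJ : ∑ u ∈ {j, k}ᶜ, |σ u| ≤ J) (hSj : S ≤ σ j) (hJS : J + η < ε' * S) :
    ∃ ω : κ → ℝ, ∑ u, |ω u| = 1 ∧ ω ᵥ* A = 0 ∧ IsDoublePolarized a ε' ω j k := by
  set N := ∑ u, |σ u|
  have hS : 0 < S :=
    pos_of_mul_pos_right (by linarith [(sum_nonneg fun _ _ => abs_nonneg _).trans hJ]) hε'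
  have hSN : S ≤ N := hSj.trans ((le_abs_self _).trans
    (single_le_sum (f := fun u => |σ u|) (fun _ _ => abs_nonneg _) (mem_univ j)))
  have hN : 0 < N := hS.trans_le hSN
  refine ⟨N⁻¹ • σ, ?_, by rw [smul_vecMul, hσ, smul_zero],
    (hA.isDoublePolarized hσ hjk ha haβ hη hk hJ hN (hJS.le.trans (by gcongr))).inv_smul hN⟩
  simp [abs_mul, ← mul_sum, abs_of_pos hN, inv_mul_cancel₀ hN.ne', N]

end DoublePolarized

theorem mul_add_lt_of_tolerance {a ν ta s ε' : ℝ} {m : ℕ} (ha : 0 < a) (ha2 : a ≤ 1 / 2)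
    (hν : 1 ≤ ν) (hta : ta = a ^ 2 * (1 + ν / a)⁻¹) (hs : 0 < s)
    (hsb : s < a ^ 2 * ta * (a ^ 2 * (1 + (a * ta / 2) ^ m) + ν * (1 + a) * ta ^ 2 / 2 + a * ta)⁻¹)
    (hε' : a ^ 2 * s / ((a - s) * ta) < ε') : s * (a + ν) < ε' * a ^ 2 := by
  have hta0 : 0 < ta := by rw [hta]; positivity
  have hta3 : ta * (a + ν) = a ^ 3 := by rw [hta]; field_simp
  have hden : a ^ 2 ≤ a ^ 2 * (1 + (a * ta / 2) ^ m) + ν * (1 + a) * ta ^ 2 / 2 + a * ta := by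
    have : 0 ≤ ν * (1 + a) * ta ^ 2 / 2 := by
      have : 0 ≤ ν := by linarith
      positivity
    nlinarith [mul_nonneg (sq_nonneg a) (by positivity : 0 ≤ (a * ta / 2) ^ m), mul_pos ha hta0]
  have hst : s < ta := hsb.trans_le <| by
    rw [mul_inv_le_iff₀ (by positivity)]
    nlinarith [mul_le_mul_of_nonneg_left hden hta0.le]
  have hsa : s < a := hst.trans (by nlinarith)
  have h1 : a ^ 2 * s < ε' * ((a - s) * ta) := (div_lt_iff₀ (by nlinarith)).1 hε'
  have hε'0 : 0 < ε' := by
    by_contra! h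
    nlinarith [mul_nonpos_of_nonpos_of_nonneg h (mul_pos (sub_pos.2 hsa) hta0).le]
  have h2 : a * s < ε' * ta := by
    refine lt_of_mul_lt_mul_left ?_ ha.le
    nlinarith [mul_pos hε'0 (mul_pos hs hta0)]
  refine lt_of_mul_lt_mul_left ?_ ha.le
  calc a * (s * (a + ν)) = a * s * (a + ν) := by ring
    _ < ε' * ta * (a + ν) := mul_lt_mul_of_pos_right h2 (by linarith)
    _ = a * (ε' * a ^ 2) := by rw [mul_assoc, hta3]; ring

theorem exists_offDiag_tolerance {a β s ε' U n : ℝ} (ha : 0 < a) (hβ : 2 * a ≤ β) (hβ2 : β ≤ 1 / 2)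
    (hs : 0 < s) (hn : 2 ≤ n) (hε' : ε' < a) (hkey : s * (a + (n - 1)) < ε' * a ^ 2) :
    ∃ ε t : ℝ, 0 < ε ∧ s + (U * (n * ε) + s) / β ≤ t ∧
      t + U * (n * ε) + n * ε < ε' * ((β - U * ε - t) / (n - 1) - t - n * ε) := by
  set T : ℝ → ℝ := fun ε => s + (U * (n * ε) + s) / β
  set f : ℝ → ℝ := fun ε => ε' * ((β - U * ε - T ε) / (n - 1) - T ε - n * ε) -
    (T ε + U * (n * ε) + n * ε)
  have hf : Continuous f := by fun_prop
  have hβ0 : 0 < β := by linarith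
  have hν : 0 < n - 1 := by linarith
  have hε'0 : 0 < ε' := pos_of_mul_pos_left ((mul_pos hs (by linarith)).trans hkey) (sq_nonneg a)
  have hf0 : 0 < f 0 := by
    have hT : T 0 * β = s * (1 + β) := by simp only [T]; field_simp; ring
    have hmain : T 0 * (n - 1 + ε' * n) < ε' * β := by
      refine lt_of_mul_lt_mul_right ?_ hβ0.le
      calc T 0 * (n - 1 + ε' * n) * β = s * (1 + β) * (n - 1 + ε' * n) := by rw [← hT]; ring
        _ ≤ s * 4 * (a + (n - 1)) := by
          have hX : n - 1 + ε' * n ≤ n - 1 + n / 4 := by nlinarith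
          have : (1 + β) * (n - 1 + ε' * n) ≤ 4 * (a + (n - 1)) := calc
            _ ≤ 3 / 2 * (n - 1 + n / 4) := mul_le_mul (by linarith) hX (by positivity) (by norm_num)
            _ ≤ 4 * (a + (n - 1)) := by linarith
          nlinarith
        _ < 4 * (ε' * a ^ 2) := by linarith
        _ ≤ ε' * β * β := by
          nlinarith [mul_le_mul_of_nonneg_left (by nlinarith : 4 * a ^ 2 ≤ β * β) hε'0.le]
    simp only [f, mul_zero, sub_zero, add_zero]
    rw [sub_pos, div_sub' hν.ne', mul_div_assoc', lt_div_iff₀ hν]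
    linarith
  obtain ⟨ε, hfε, hε⟩ := (((hf.tendsto 0).eventually (lt_mem_nhds hf0)).filter_mono
    nhdsWithin_le_nhds |>.and (self_mem_nhdsWithin (s := Set.Ioi 0))).exists
  exact ⟨ε, T ε, hε, le_rfl, sub_pos.1 hfε⟩

theorem stmt_6 {U X : ℕ} [NeZero U]
    (A : Matrix (Fin U) (Fin X) ℝ)
    (hA0 : ∀ i j, 0 ≤ A i j)
    (hcol : ∀ j, ∑ i, A i j = 1)
    (hrow : ∀ i, ∃ j, A i j ≠ 0)
    (n : ℕ) (hn2 : 2 ≤ n) (hnU : n ≤ U)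
    (ta : ℝ) (hta : ta = amin A ^ 2 * (1 + ((n : ℝ) - 1) / amin A)⁻¹)
    (εs : ℝ) (hεs0 : 0 < εs)
    (hεsbound : εs < amin A ^ 2 * ta *
      (amin A ^ 2 * (1 + (amin A * ta / 2) ^ (n - 1)) +
        ((n : ℝ) - 1) * (1 + amin A) * ta ^ 2 / 2 + amin A * ta)⁻¹)
    (ε' : ℝ)
    (hε'lb : amin A ^ 2 * εs / ((amin A - εs) * ta) < ε') (hε'ub : ε' < amin A)
    -- the left null space of `A` contains no L1-normalized
    -- `(a_min, ε')`-double polarized vector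
    (hnodbl : ¬ ∃ (ω : Fin U → ℝ) (j k : Fin U), j ≠ k ∧
      (∑ i, |ω i| = 1) ∧ (∀ l, ∑ i, ω i * A i l = 0) ∧
      amin A ≤ ω j ∧ ω k ≤ -(amin A) ∧ ∀ i, i ≠ j → i ≠ k → |ω i| ≤ ε') :
    ∃ ε : ℝ, 0 < ε ∧
      ∀ Υ : Fin n → Fin U → ℝ,
        (∀ i, ∑ j, |Υ i j| = 1) →
        (∀ i l, ∑ k, Υ i k * A k l = 0) →
        (∀ i : Fin n, amin A ≤ Υ i ⟨(i : ℕ), by have := i.isLt; omega⟩) →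
        (∀ (i : Fin n) (j : Fin U), (j : ℕ) ≠ (i : ℕ) → Υ i j ≤ ε) →
        ∀ i : Fin n, ¬ ∃ c : Fin n → ℝ,
          ∑ j, |Υ i j - ∑ k ∈ Finset.univ.erase i, c k * Υ k j| ≤ εs := by
  have ha : 0 < amin A := amin_pos hA0 hrow
  have hhalf := card_mul_amin_le_half hA0 hcol hrow
  have hn : (2 : ℝ) ≤ n := by exact_mod_cast hn2
  have hβ : 2 * amin A ≤ U * amin A :=
    mul_le_mul_of_nonneg_right (by exact_mod_cast hn2.trans hnU) ha.le
  have hkey := mul_add_lt_of_tolerance ha (by linarith) (by linarith) hta hεs0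
    hεsbound hε'lb
  obtain ⟨ε, t, hε, ht, hsmall⟩ := exists_offDiag_tolerance (U := U) ha hβ hhalf hεs0 hn hε'ub hkey
  refine ⟨ε, hε, fun Υ hnorm hnull hdiag hoff i₀ ⟨c, hc⟩ => hnodbl ?_⟩
  have hnull' (k : Fin n) : Υ k ᵥ* A = 0 := funext (hnull k)
  have hoff' (k : Fin n) (u : Fin U) (hu : u ≠ Fin.castLE hnU k) : Υ k u ≤ ε :=
    hoff k u fun h => hu (Fin.ext h)
  have hmass := positiveMassBound_amin hA0 hcol hrow
  obtain ⟨j, e, hej, he1, hes⟩ := exists_normalized_relation hc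
  have hw := sum_abs_posPart_vecMul_le hmass (by linarith) hnull' (Fin.castLE_injective hnU)
    hε.le hoff' he1 hes
  have hD := hmass.sub_le_apply (hnull' j) (hnorm j) (ha.trans_le (hdiag j)).le hε.le
    (hoff' j)
  simp only [Fintype.card_fin] at hw hD
  obtain ⟨y, k, hjk, hSj, hk, hJ⟩ := exists_spike (Fin.castLE_injective hnU)
    (fun k => ha.trans_le (hdiag k)) hε.le hoff' (posPart_nonneg e)
    (fun k => sup_le ((le_abs_self _).trans (he1 k)) zero_le_one) (by simp [hej])
    (by simpa using hn2) (hw.trans ht) hD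
  simp only [Fintype.card_fin] at hSj hk hJ
  obtain ⟨ω, hω1, hω0, hpol⟩ := exists_isDoublePolarized (ε' := ε') hmass
    (vecMul_vecMul_eq_zero hnull' y) hjk ha (by linarith) (by nlinarith) (by positivity)
    hk hJ hSj (by linarith)
  exact ⟨ω, _, _, hjk, hω1, congrFun hω0, hpol⟩
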